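/- Let x_1,…,x_n ∈ ℝ^d with labels y_i ∈ {−1,+1}, let ω_i > 0, Δ_i > 0, ι_i ∈ ℝ, and let L(w) = Σ_{i=1}^n ω_i log(1 + e^{ι_i} e^{−Δ_i y_i ⟨x_i, w⟩}). Suppose ŵ ≠ 0 satisfies y_i⟨x_i, ŵ⟩ ≥ 1/Δ_i for all i ∈ [n], and fix ε > 0. Then there exists R₀ > 0 such that for every R ≥ R₀ the following holds: for every w ∈ ℝ^d for which there exists an index j ∈ [n] with Δ_j y_j ⟨x_j, w⟩ ≤ (1 − ε)·R/‖ŵ‖₂, one has L((R/‖ŵ‖₂)·ŵ) < L(w). -/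

import Mathlib

/-!
Write `c = R / ‖ŵ‖`. Since every margin of `ŵ` is at least `1`, every margin of `c • ŵ` is at
least `c`, and `log (1 + t) ≤ t` gives `L (c • ŵ) ≤ A e^{-c}` with `A = ∑ ωᵢ e^{ιᵢ}`. A point `w`
with margin at most `(1 - ε) c` at `j` pays at least `ω_j log (1 + e^{ι_j} e^{-(1-ε)c})`, which is
of order `e^{-(1-ε)c}`; it beats `A e^{-c}` once `c` is large, uniformly over the finitely many `j`.
-/

open Filter Real
open scoped RealInnerProductSpace

lemma log_one_add_exp_mul_exp_neg_le (b s : ℝ) :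
    log (1 + exp b * exp (-s)) ≤ exp b * exp (-s) := by
  have := log_le_sub_one_of_pos (x := 1 + exp b * exp (-s)) (by positivity)
  linarith

lemma log_one_add_exp_mul_exp_neg_nonneg (b s : ℝ) :
    0 ≤ log (1 + exp b * exp (-s)) :=
  log_nonneg (le_add_of_nonneg_right (by positivity))

lemma log_one_add_exp_mul_exp_neg_antitone (b : ℝ) :
    Antitone fun s => log (1 + exp b * exp (-s)) := fun _ _ hst =>
  log_le_log (by positivity) (by gcongr)

lemma eventually_mul_exp_neg_lt_mul_log_one_add (A b : ℝ) {ω ε : ℝ} (hω : 0 < ω) (hε : 0 < ε) :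
    ∀ᶠ c in atTop, A * exp (-c) < ω * log (1 + exp b * exp (-((1 - ε) * c))) := by
  have hlim : Tendsto (fun c => A * (exp b * exp (-c) + 2 * exp (-(ε * c)))) atTop (nhds 0) := by
    have hu := tendsto_exp_neg_atTop_nhds_zero.comp (tendsto_id.const_mul_atTop hε)
    simpa using ((tendsto_exp_neg_atTop_nhds_zero.const_mul (exp b)).add
      (hu.const_mul 2)).const_mul A
  filter_upwards [hlim.eventually_lt_const (by positivity : 0 < 2 * ω * exp b)] with c hc
  set v := exp (-((1 - ε) * c))
  set t := exp b * v
  have hv : 0 < v := exp_pos _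
  have ht : 0 < t := by positivity
  have hsplit : exp (-c) = exp (-(ε * c)) * v := by rw [← exp_add]; ring_nf
  -- `log (1 + t) ≥ 2t / (t + 2)`, so it suffices that `A e^{-c} (t + 2) < 2 ω t`.
  have key : A * exp (-c) * (t + 2) < ω * (2 * t) :=
    calc A * exp (-c) * (t + 2) = v * (A * (exp b * exp (-c) + 2 * exp (-(ε * c)))) := by
          rw [hsplit]; ring
      _ < v * (2 * ω * exp b) := mul_lt_mul_of_pos_left hc hv
      _ = ω * (2 * t) := by ring
  calc A * exp (-c) < ω * (2 * t / (t + 2)) := by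
        rw [mul_div_assoc', lt_div_iff₀ (by positivity)]; exact key
    _ ≤ ω * log (1 + t) := mul_le_mul_of_nonneg_left (le_log_one_add_of_nonneg ht.le) hω.le

section VSLoss

variable {I E : Type*} [Fintype I] [NormedAddCommGroup E] [InnerProductSpace ℝ E]

noncomputable def vsLoss (x : I → E) (y ω Δ ι : I → ℝ) (w : E) : ℝ :=
  ∑ i, ω i * log (1 + exp (ι i) * exp (-(Δ i) * (y i * ⟪x i, w⟫)))

variable (x : I → E) (y ω Δ ι : I → ℝ)

lemma vsLoss_smul_le {v : E} (hω : ∀ i, 0 ≤ ω i) (hv : ∀ i, 1 ≤ Δ i * (y i * ⟪x i, v⟫))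
    {c : ℝ} (hc : 0 ≤ c) :
    vsLoss x y ω Δ ι (c • v) ≤ (∑ i, ω i * exp (ι i)) * exp (-c) := by
  rw [vsLoss, Finset.sum_mul]
  refine Finset.sum_le_sum fun i _ => ?_
  have hmargin : c ≤ Δ i * (y i * ⟪x i, c • v⟫) := by
    rw [real_inner_smul_right]
    nlinarith [hv i]
  have hlog : log (1 + exp (ι i) * exp (-(Δ i) * (y i * ⟪x i, c • v⟫))) ≤ exp (ι i) * exp (-c) :=
    calc _ ≤ log (1 + exp (ι i) * exp (-c)) := by
          rw [neg_mul]; exact log_one_add_exp_mul_exp_neg_antitone _ hmargin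
      _ ≤ exp (ι i) * exp (-c) := log_one_add_exp_mul_exp_neg_le _ _
  calc _ ≤ ω i * (exp (ι i) * exp (-c)) := mul_le_mul_of_nonneg_left hlog (hω i)
    _ = _ := by ring

lemma mul_log_le_vsLoss (hω : ∀ i, 0 ≤ ω i) (w : E) (j : I) :
    ω j * log (1 + exp (ι j) * exp (-(Δ j * (y j * ⟪x j, w⟫)))) ≤ vsLoss x y ω Δ ι w := by
  rw [vsLoss]
  simp_rw [neg_mul]
  exact Finset.single_le_sum
    (f := fun i => ω i * log (1 + exp (ι i) * exp (-(Δ i * (y i * ⟪x i, w⟫)))))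
    (fun i _ => mul_nonneg (hω i) (log_one_add_exp_mul_exp_neg_nonneg _ _)) (Finset.mem_univ j)

end VSLoss

theorem stmt10_general {n d : ℕ}
    (x : Fin n → EuclideanSpace ℝ (Fin d)) (y : Fin n → ℝ)
    (ω Δ ι : Fin n → ℝ) (hω : ∀ i, 0 < ω i) (hΔ : ∀ i, 0 < Δ i)
    (L : EuclideanSpace ℝ (Fin d) → ℝ)
    (hL : ∀ w, L w = ∑ i, ω i *
      Real.log (1 + Real.exp (ι i) * Real.exp (-(Δ i) * (y i * ⟪x i, w⟫))))
    (ws : EuclideanSpace ℝ (Fin d)) (hws : ws ≠ 0)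
    (hfeas : ∀ i, 1 / Δ i ≤ y i * ⟪x i, ws⟫)
    (ε : ℝ) (hε : 0 < ε) :
    ∃ R₀ > (0:ℝ), ∀ R ≥ R₀, ∀ w : EuclideanSpace ℝ (Fin d),
      (∃ j, Δ j * (y j * ⟪x j, w⟫) ≤ (1 - ε) * (R / ‖ws‖)) →
      L ((R / ‖ws‖) • ws) < L w := by
  obtain rfl : L = vsLoss x y ω Δ ι := funext hL
  have hω' : ∀ i, 0 ≤ ω i := fun i => (hω i).le
  have hmargin : ∀ i, 1 ≤ Δ i * (y i * ⟪x i, ws⟫) := fun i => by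
    rw [← div_le_iff₀' (hΔ i)]; exact hfeas i
  set A := ∑ i, ω i * exp (ι i)
  have hc : Tendsto (fun R => R / ‖ws‖) atTop atTop :=
    tendsto_id.atTop_div_const (norm_pos_iff.mpr hws)
  obtain ⟨R₀, hR₀⟩ := eventually_atTop.1 <| hc.eventually <|
    (eventually_ge_atTop 0).and <| eventually_all.2 fun j =>
      eventually_mul_exp_neg_lt_mul_log_one_add A (ι j) (hω j) hε
  refine ⟨max R₀ 1, by positivity, fun R hR w ⟨j, hj⟩ => ?_⟩
  obtain ⟨hc0, hlt⟩ := hR₀ R (le_of_max_le_left hR)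
  calc vsLoss x y ω Δ ι ((R / ‖ws‖) • ws) ≤ A * exp (-(R / ‖ws‖)) :=
        vsLoss_smul_le x y ω Δ ι hω' hmargin hc0
    _ < ω j * log (1 + exp (ι j) * exp (-((1 - ε) * (R / ‖ws‖)))) := hlt j
    _ ≤ ω j * log (1 + exp (ι j) * exp (-(Δ j * (y j * ⟪x j, w⟫)))) :=
        mul_le_mul_of_nonneg_left (log_one_add_exp_mul_exp_neg_antitone _ hj) (hω' j)
    _ ≤ vsLoss x y ω Δ ι w := mul_log_le_vsLoss x y ω Δ ι hω' w j

theorem stmt10 {n d : ℕ}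
    (x : Fin n → EuclideanSpace ℝ (Fin d)) (y : Fin n → ℝ)
    (hy : ∀ i, y i = 1 ∨ y i = -1)
    (ω Δ ι : Fin n → ℝ) (hω : ∀ i, 0 < ω i) (hΔ : ∀ i, 0 < Δ i)
    (L : EuclideanSpace ℝ (Fin d) → ℝ)
    (hL : ∀ w, L w = ∑ i, ω i *
      Real.log (1 + Real.exp (ι i) * Real.exp (-(Δ i) * (y i * ⟪x i, w⟫))))
    (ws : EuclideanSpace ℝ (Fin d)) (hws : ws ≠ 0)
    (hfeas : ∀ i, 1 / Δ i ≤ y i * ⟪x i, ws⟫)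
    (ε : ℝ) (hε : 0 < ε) :
    ∃ R₀ > (0:ℝ), ∀ R ≥ R₀, ∀ w : EuclideanSpace ℝ (Fin d),
      (∃ j, Δ j * (y j * ⟪x j, w⟫) ≤ (1 - ε) * (R / ‖ws‖)) →
      L ((R / ‖ws‖) • ws) < L w :=
  stmt10_general x y ω Δ ι hω hΔ L hL ws hws hfeas ε hε
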